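/- Let s be a complex number with Re s ≥ 0 and let v ∈ C³([0,1], ℂ) satisfy s v + v + v''' = 0 on [0,1] together with the boundary conditions v''(0) = 0, v'(1) = 0, v''(1) = 0. Then v ≡ 0 on [0,1]. -/

import Mathlib

/-!
Pairing the equation with `v` gives the energy identity
`Re (v̄ v''') = (Re (v̄ v'') - |v'|² / 2)'`. Integrated over `[0,1]` with the boundary conditions it
reads `-(Re s + 1) ∫₀¹ |v|² = |v'(0)|² / 2`, whose two sides have opposite signs, so `∫₀¹ |v|² = 0`.
-/

open Set intervalIntegral MeasureTheory
open scoped RealInnerProductSpace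

theorem hasDerivAt_iteratedDeriv {𝕜 E : Type*} [NontriviallyNormedField 𝕜] [NormedAddCommGroup E]
    [NormedSpace 𝕜 E] {n k : ℕ} {f : 𝕜 → E} (hf : ContDiff 𝕜 n f) (hk : k < n) (x : 𝕜) :
    HasDerivAt (iteratedDeriv k f) (iteratedDeriv (k + 1) f x) x := by
  rw [iteratedDeriv_succ]
  exact (hf.differentiable_iteratedDeriv k (by exact_mod_cast hk) x).hasDerivAt

section Energy

variable {E : Type*} [NormedAddCommGroup E] [InnerProductSpace ℝ E] {f : ℝ → E}

theorem hasDerivAt_inner_iteratedDeriv_two_sub_norm_sq_deriv (hf : ContDiff ℝ 3 f) (x : ℝ) :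
    HasDerivAt (fun y ↦ ⟪f y, iteratedDeriv 2 f y⟫ - ‖deriv f y‖ ^ 2 / 2)
      ⟪f x, iteratedDeriv 3 f x⟫ x := by
  have h0 := hasDerivAt_iteratedDeriv hf (k := 0) (by norm_num) x
  have h1 := hasDerivAt_iteratedDeriv hf (k := 1) (by norm_num) x
  have h2 := hasDerivAt_iteratedDeriv hf (k := 2) (by norm_num) x
  simp only [iteratedDeriv_zero, iteratedDeriv_one, zero_add, Nat.reduceAdd] at h0 h1 h2
  exact ((h0.inner ℝ h2).sub (h1.norm_sq.div_const 2)).congr_deriv (by ring)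

theorem integral_inner_iteratedDeriv_three (hf : ContDiff ℝ 3 f) (a b : ℝ) :
    ∫ x in a..b, ⟪f x, iteratedDeriv 3 f x⟫ =
      (⟪f b, iteratedDeriv 2 f b⟫ - ‖deriv f b‖ ^ 2 / 2) -
        (⟪f a, iteratedDeriv 2 f a⟫ - ‖deriv f a‖ ^ 2 / 2) := by
  have hcont : Continuous fun x ↦ ⟪f x, iteratedDeriv 3 f x⟫ :=
    hf.continuous.inner (hf.continuous_iteratedDeriv 3 le_rfl)
  exact integral_eq_sub_of_hasDerivAt
    (fun x _ ↦ hasDerivAt_inner_iteratedDeriv_two_sub_norm_sq_deriv hf x)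
    (hcont.intervalIntegrable a b)

end Energy

theorem Complex.real_inner_mul_right_self (c z : ℂ) : ⟪z, c * z⟫ = c.re * ‖z‖ ^ 2 := by
  rw [Complex.inner, mul_assoc, Complex.mul_conj, ← Complex.sq_norm, Complex.re_mul_ofReal]

theorem eqOn_zero_of_intervalIntegral_eq_zero {g : ℝ → ℝ} {a b : ℝ} (hab : a < b)
    (hg : ContinuousOn g (Icc a b)) (hg0 : ∀ x ∈ Icc a b, 0 ≤ g x)
    (hint : ∫ x in a..b, g x = 0) : EqOn g 0 (Icc a b) := by
  have hae : g =ᵐ[volume.restrict (Ioc a b)] 0 := by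
    refine (integral_eq_zero_iff_of_le_of_nonneg_ae hab.le ?_
      (hg.intervalIntegrable_of_Icc hab.le)).mp hint
    exact (ae_restrict_mem measurableSet_Ioc).mono fun x hx ↦ hg0 x (Ioc_subset_Icc_self hx)
  rw [Measure.restrict_congr_set Ioc_ae_eq_Icc] at hae
  exact Measure.eqOn_Icc_of_ae_eq volume hab.ne hae hg continuousOn_const

theorem stmt3 (s : ℂ) (hs : 0 ≤ s.re) (v : ℝ → ℂ) (hv : ContDiff ℝ 3 v)
    (hode : ∀ x ∈ Set.Icc (0 : ℝ) 1, s * v x + v x + iteratedDeriv 3 v x = 0)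
    (hb0 : iteratedDeriv 2 v 0 = 0) (hb1 : deriv v 1 = 0)
    (hb2 : iteratedDeriv 2 v 1 = 0) :
    ∀ x ∈ Set.Icc (0 : ℝ) 1, v x = 0 := by
  have hpair : ∫ x in (0 : ℝ)..1, ⟪v x, iteratedDeriv 3 v x⟫ =
      -(s.re + 1) * ∫ x in (0 : ℝ)..1, ‖v x‖ ^ 2 := by
    rw [← intervalIntegral.integral_const_mul]
    refine integral_congr fun x hx ↦ ?_
    rw [uIcc_of_le zero_le_one] at hx
    rw [show iteratedDeriv 3 v x = -(s + 1) * v x by linear_combination hode x hx,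
      Complex.real_inner_mul_right_self]
    simp
  have henergy := integral_inner_iteratedDeriv_three hv 0 1
  rw [hpair, hb0, hb1, hb2] at henergy
  have hnonneg : 0 ≤ ∫ x in (0 : ℝ)..1, ‖v x‖ ^ 2 :=
    integral_nonneg zero_le_one fun x _ ↦ by positivity
  have hzero : ∫ x in (0 : ℝ)..1, ‖v x‖ ^ 2 = 0 := by
    simp only [inner_zero_right, norm_zero] at henergy
    nlinarith [sq_nonneg ‖deriv v 0‖]
  intro x hx
  simpa using eqOn_zero_of_intervalIntegral_eq_zero zero_lt_one
    (hv.continuous.norm.pow 2).continuousOn (fun y _ ↦ sq_nonneg _) hzero hx
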